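/- Let X be an order complete Banach lattice and let A : X → X be a positive bounded linear operator (x ≥ 0 implies Ax ≥ 0). Then the multiplication operator L_A R_A : T ↦ A∘T∘A is a band projection on the space of regular operators on X — equivalently, for every positive bounded linear operator T : X → X one has A∘T∘A ≤ T (i.e., A(T(Ax)) ≤ Tx for all x ≥ 0) and A²∘T∘A² = A∘T∘A — if and only if A is a band projection on X, i.e., A∘A = A and Ax ≤ x for every x ≥ 0. -/

import Mathlib

/-! Testing the hypothesis on `T = id` gives `A² ≤ I` on the positive cone, so everything reduces
to `A² = A`. For `y ≥ 0` with `A y ≠ 0`, the closed positive cone and Hahn–Banach give a positive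
functional `f` with `f (A y) > 0`; the rank-one positive operator `T x = f x • y` turns
`A²TA² = ATA` into `f (A² y) • A² y = f (A y) • A y`, which forces `A² y = A y`. Every vector is a
difference of positive ones. -/

theorem eq_of_apply_smul_eq_apply_smul {𝕜 M : Type*} [Field 𝕜] [LinearOrder 𝕜]
    [IsStrictOrderedRing 𝕜] [AddCommGroup M] [Module 𝕜 M] (f : M →ₗ[𝕜] 𝕜) {u v : M}
    (hv : 0 ≤ f v) (hu : 0 < f u) (h : f v • v = f u • u) : v = u := by
  have hsq : f v * f v = f u * f u := by simpa using congrArg f h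
  rw [(mul_self_inj hv hu.le).1 hsq] at h
  exact smul_right_injective M hu.ne' h

section OrderedTVS

variable {E : Type*} [TopologicalSpace E] [AddCommGroup E] [PartialOrder E] [IsOrderedAddMonoid E]
  [Module ℝ E] [PosSMulMono ℝ E] [IsTopologicalAddGroup E] [ContinuousSMul ℝ E]
  [LocallyConvexSpace ℝ E] [OrderClosedTopology E]

theorem exists_nonneg_dual_pos_of_not_nonpos {a : E} (ha : ¬ a ≤ 0) :
    ∃ f : StrongDual ℝ E, (∀ x, 0 ≤ x → 0 ≤ f x) ∧ 0 < f a := by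
  obtain ⟨f, hf, hfa⟩ :=
    (ProperCone.positive ℝ E).hyperplane_separation_point (x₀ := -a) (by simpa using ha)
  exact ⟨f, hf, by simpa using hfa⟩

theorem apply_apply_eq_apply_of_sandwich_eq {A : E →L[ℝ] E} (hA : ∀ x, 0 ≤ x → 0 ≤ A x)
    (H : ∀ T : E →L[ℝ] E, (∀ x, 0 ≤ x → 0 ≤ T x) → ∀ x, A (A (T (A (A x)))) = A (T (A x)))
    {y : E} (hy : 0 ≤ y) : A (A y) = A y := by
  by_cases hAy : A y ≤ 0
  · rw [le_antisymm hAy (hA y hy), map_zero]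
  obtain ⟨f, hf, hfAy⟩ := exists_nonneg_dual_pos_of_not_nonpos hAy
  have h := H (f.smulRight y) (fun x hx => smul_nonneg (hf x hx) hy) y
  simp only [ContinuousLinearMap.smulRight_apply, map_smul] at h
  exact eq_of_apply_smul_eq_apply_smul (f : E →ₗ[ℝ] ℝ) (hf _ (hA _ (hA y hy))) hfAy h

end OrderedTVS

theorem eq_of_eq_on_nonneg {α β F : Type*} [AddCommGroup α] [Lattice α] [IsOrderedAddMonoid α]
    [AddGroup β] [FunLike F α β] [AddMonoidHomClass F α β] {f g : F}
    (h : ∀ x, 0 ≤ x → f x = g x) (x : α) : f x = g x := by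
  rw [← posPart_sub_negPart x, map_sub, map_sub, h _ (posPart_nonneg x), h _ (negPart_nonneg x)]

theorem multiplication_operator_band_projection_iff
    {X : Type*} [NormedAddCommGroup X] [Lattice X] [HasSolidNorm X]
    [IsOrderedAddMonoid X] [NormedSpace ℝ X]
    [PosSMulStrictMono ℝ X]
    (A : X →L[ℝ] X) (hA : ∀ x : X, 0 ≤ x → 0 ≤ A x) :
    (∀ T : X →L[ℝ] X, (∀ x : X, 0 ≤ x → 0 ≤ T x) →
      (∀ x : X, 0 ≤ x → A (T (A x)) ≤ T x) ∧
      (∀ x : X, A (A (T (A (A x)))) = A (T (A x)))) ↔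
    ((∀ x : X, A (A x) = A x) ∧ (∀ x : X, 0 ≤ x → A x ≤ x)) := by
  constructor
  · intro H
    have hsq : ∀ x, A (A x) = A x := eq_of_eq_on_nonneg (f := A.comp A) (g := A) fun y hy =>
      apply_apply_eq_apply_of_sandwich_eq hA (fun T hT => (H T hT).2) hy
    refine ⟨hsq, fun x hx => ?_⟩
    simpa only [ContinuousLinearMap.id_apply, hsq] using (H (.id ℝ X) fun _ h => h).1 x hx
  · rintro ⟨hsq, hle⟩ T hT
    refine ⟨fun x hx => ?_, fun x => by rw [hsq, hsq]⟩
    calc A (T (A x)) ≤ T (A x) := hle _ (hT _ (hA x hx))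
      _ ≤ T x := (PositiveLinearMap.mk₀ (T : X →ₗ[ℝ] X) hT).monotone' (hle x hx)
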